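/- Let n, k, r be integers with n ≥ 2k² and r ≥ 2, let H be an n-vertex k-graph with an r-edge-coloring c: E(H) → {C_1,…,C_r}, assume H contains no good gadget of the first, second, or third kind, and assume δ(H) > (1/2)·C(n−1,k−1) + ((k²+1)/2)·C(n−2,k−2). If the coloring c is not monochromatic (i.e., at least two colors appear on edges of H), then there exist distinct vertices u, v of H such that the ordered pair (u,v) is not type S. -/

import Mathlib

open Finset

def HyperUniform {V : Type*} (k : ℕ) (H : Finset (Finset V)) : Prop := ∀ e ∈ H, e.card = k

def IsPM {V : Type*} [Fintype V] (H M : Finset (Finset V)) : Prop :=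
  M ⊆ H ∧ (∀ e ∈ M, ∀ f ∈ M, e ≠ f → Disjoint e f) ∧ ∀ v : V, ∃ e ∈ M, v ∈ e

def hdeg {V : Type*} [DecidableEq V] (H : Finset (Finset V)) (v : V) : ℕ :=
  (H.filter (fun e => v ∈ e)).card

def nbr {V : Type*} [Fintype V] [DecidableEq V] (H : Finset (Finset V)) (u : V) :
    Finset (Finset V) :=
  (Finset.univ : Finset V).powerset.filter (fun T => u ∉ T ∧ insert u T ∈ H)

def cprof {V : Type*} {r : ℕ} (c : Finset V → Fin r) (M : Finset (Finset V)) : Fin r → ℕ :=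
  fun i => (M.filter (fun e => c e = i)).card

def Gadget1 {V : Type*} [Fintype V] [DecidableEq V] {r : ℕ} (H : Finset (Finset V))
    (c : Finset V → Fin r) : Prop :=
  ∃ u v : V, u ≠ v ∧ ∃ T₁ T₂ : Finset V,
    T₁ ∈ nbr H u ∧ T₁ ∈ nbr H v ∧ T₂ ∈ nbr H u ∧ T₂ ∈ nbr H v ∧ Disjoint T₁ T₂ ∧
    cprof c {insert u T₁, insert v T₂} ≠ cprof c {insert v T₁, insert u T₂}

def Gadget2 {V : Type*} [Fintype V] [DecidableEq V] {r : ℕ} (H : Finset (Finset V))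
    (c : Finset V → Fin r) : Prop :=
  ∃ u₁ u₂ u₃ : V, u₁ ≠ u₂ ∧ u₁ ≠ u₃ ∧ u₂ ≠ u₃ ∧ ∃ T₁ T₂ T₃ : Finset V,
    T₁ ∈ nbr H u₂ ∧ T₁ ∈ nbr H u₃ ∧ T₂ ∈ nbr H u₁ ∧ T₂ ∈ nbr H u₃ ∧
    T₃ ∈ nbr H u₁ ∧ T₃ ∈ nbr H u₂ ∧
    Disjoint T₁ T₂ ∧ Disjoint T₁ T₃ ∧ Disjoint T₂ T₃ ∧
    u₁ ∉ T₁ ∧ u₂ ∉ T₂ ∧ u₃ ∉ T₃ ∧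
    cprof c {insert u₂ T₁, insert u₃ T₂, insert u₁ T₃} ≠
      cprof c {insert u₃ T₁, insert u₁ T₂, insert u₂ T₃}

def Gadget3 {V : Type*} [Fintype V] [DecidableEq V] {r : ℕ} (k : ℕ) (H : Finset (Finset V))
    (c : Finset V → Fin r) : Prop :=
  ∃ e ∈ H, ∃ f ∈ H, ∃ ℓ : ℕ, 1 ≤ ℓ ∧ ℓ ≤ k ∧
    ∃ u v : Fin ℓ → V, ∃ T : Fin ℓ → Finset V,
      Function.Injective u ∧ Function.Injective v ∧
      Finset.image u Finset.univ = e \ f ∧ Finset.image v Finset.univ = f \ e ∧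
      (∀ i, T i ∈ nbr H (u i) ∧ T i ∈ nbr H (v i)) ∧
      (∀ i j, i ≠ j → Disjoint (T i) (T j)) ∧
      (∀ i, Disjoint (T i) (e ∪ f)) ∧
      cprof c (insert f (Finset.image (fun i => insert (u i) (T i)) Finset.univ)) ≠
        cprof c (insert e (Finset.image (fun i => insert (v i) (T i)) Finset.univ))

def GadgetFree {V : Type*} [Fintype V] [DecidableEq V] {r : ℕ} (k : ℕ) (H : Finset (Finset V))
    (c : Finset V → Fin r) : Prop :=
  ¬ Gadget1 H c ∧ ¬ Gadget2 H c ∧ ¬ Gadget3 k H c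

def TypeS {V : Type*} [Fintype V] [DecidableEq V] {r : ℕ} (k : ℕ) (H : Finset (Finset V))
    (c : Finset V → Fin r) (u v : V) : Prop :=
  k ^ 2 * ((Fintype.card V - 2).choose (k - 2)) ≤
    ((nbr H u ∩ nbr H v).filter (fun T => c (insert u T) = c (insert v T))).card

def TypeCC {V : Type*} [Fintype V] [DecidableEq V] {r : ℕ} (k : ℕ) (H : Finset (Finset V))
    (c : Finset V → Fin r) (i j : Fin r) (u v : V) : Prop :=
  k ^ 2 * ((Fintype.card V - 2).choose (k - 2)) ≤
    ((nbr H u ∩ nbr H v).filter (fun T => c (insert u T) = i ∧ c (insert v T) = j)).card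

section Aux

variable {n k r : ℕ}

lemma mem_nbr {H : Finset (Finset (Fin n))} {u : Fin n} {T : Finset (Fin n)} :
    T ∈ nbr H u ↔ u ∉ T ∧ insert u T ∈ H := by
  simp [nbr]

lemma card_of_mem_nbr {H : Finset (Finset (Fin n))} (hH : HyperUniform k H)
    {u : Fin n} {T : Finset (Fin n)} (hu : T ∈ nbr H u) : T.card = k - 1 := by
  rw [mem_nbr] at hu
  have h := hH _ hu.2
  rw [Finset.card_insert_of_notMem hu.1] at h
  omega

lemma card_nbr_containing {H : Finset (Finset (Fin n))} (hH : HyperUniform k H)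
    (hk : 2 ≤ k) {u w : Fin n} (hwu : w ≠ u) :
    ((nbr H u).filter (fun T => w ∈ T)).card ≤ (n - 2).choose (k - 2) := by
  classical
  have hcard : ((Finset.univ : Finset (Fin n)) \ {u, w}).card = n - 2 := by
    rw [Finset.card_sdiff_of_subset (Finset.subset_univ _), Finset.card_univ, Fintype.card_fin,
      Finset.card_pair (Ne.symm hwu)]
  calc ((nbr H u).filter (fun T => w ∈ T)).card
      ≤ (Finset.powersetCard (k - 2) ((Finset.univ : Finset (Fin n)) \ {u, w})).card := by
        apply Finset.card_le_card_of_injOn (fun T => T.erase w)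
        · intro T hT
          rw [Finset.mem_coe, Finset.mem_filter] at hT
          obtain ⟨hT1, hwT⟩ := hT
          rw [mem_nbr] at hT1
          rw [Finset.mem_coe, Finset.mem_powersetCard]
          constructor
          · intro x hx
            rw [Finset.mem_erase] at hx
            simp only [Finset.mem_sdiff, Finset.mem_univ, true_and, Finset.mem_insert,
              Finset.mem_singleton]
            push_neg
            exact ⟨fun hxe => hT1.1 (hxe ▸ hx.2), hx.1⟩
          · have hTc : T.card = k - 1 := card_of_mem_nbr hH (mem_nbr.mpr hT1)
            rw [Finset.card_erase_of_mem hwT, hTc]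
            omega
        · intro T1 h1 T2 h2 hE
          simp only [Finset.coe_filter, Set.mem_setOf_eq] at h1 h2
          have := congrArg (insert w) hE
          rwa [Finset.insert_erase h1.2, Finset.insert_erase h2.2] at this
    _ = (n - 2).choose (k - 2) := by rw [Finset.card_powersetCard, hcard]

lemma exists_good_T {H : Finset (Finset (Fin n))} (hH : HyperUniform k H)
    {c : Finset (Fin n) → Fin r} (hk : 2 ≤ k) (hkn : k ≤ n)
    {u v : Fin n} (huv : u ≠ v) (hTS : TypeS k H c u v)
    (F : Finset (Fin n)) (hu : u ∉ F) (hF : F.card < k ^ 2) :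
    ∃ T, T ∈ nbr H u ∧ T ∈ nbr H v ∧ c (insert u T) = c (insert v T) ∧ Disjoint T F := by
  classical
  set S := (nbr H u ∩ nbr H v).filter (fun T => c (insert u T) = c (insert v T)) with hS
  have hScard : k ^ 2 * (n - 2).choose (k - 2) ≤ S.card := by
    have h := hTS
    rwa [TypeS, Fintype.card_fin] at h
  have hbad : (S.filter (fun T => ¬ Disjoint T F)).card ≤ F.card * (n - 2).choose (k - 2) := by
    have hsub : S.filter (fun T => ¬ Disjoint T F) ⊆
        F.biUnion (fun w => (nbr H u).filter (fun T => w ∈ T)) := by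
      intro T hT
      rw [Finset.mem_filter] at hT
      obtain ⟨w, hwT, hwF⟩ := Finset.not_disjoint_iff.mp hT.2
      rw [Finset.mem_biUnion]
      exact ⟨w, hwF, Finset.mem_filter.mpr
        ⟨(Finset.mem_inter.mp (Finset.mem_filter.mp hT.1).1).1, hwT⟩⟩
    calc (S.filter (fun T => ¬ Disjoint T F)).card
        ≤ (F.biUnion (fun w => (nbr H u).filter (fun T => w ∈ T))).card :=
          Finset.card_le_card hsub
      _ ≤ ∑ w ∈ F, ((nbr H u).filter (fun T => w ∈ T)).card := Finset.card_biUnion_le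
      _ ≤ F.card * (n - 2).choose (k - 2) := by
          rw [← smul_eq_mul]
          exact Finset.sum_le_card_nsmul _ _ _ (fun w hw =>
            card_nbr_containing hH hk (fun hwe => hu (hwe ▸ hw)))
  have hpos : 0 < (n - 2).choose (k - 2) := Nat.choose_pos (by omega)
  have hne : (S.filter (fun T => Disjoint T F)).Nonempty := by
    rw [← Finset.card_pos]
    have hsplit := Finset.card_filter_add_card_filter_not
      (s := S) (fun T => Disjoint T F)
    have hlt : F.card * (n - 2).choose (k - 2) < k ^ 2 * (n - 2).choose (k - 2) :=
      (Nat.mul_lt_mul_right hpos).mpr hF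
    omega
  obtain ⟨T, hT⟩ := hne
  rw [Finset.mem_filter] at hT
  obtain ⟨hT1, hT2⟩ := hT
  rw [hS, Finset.mem_filter, Finset.mem_inter] at hT1
  exact ⟨T, hT1.1.1, hT1.1.2, hT1.2, hT2⟩

lemma build_T {H : Finset (Finset (Fin n))} (hH : HyperUniform k H)
    {c : Finset (Fin n) → Fin r} (hk : 2 ≤ k) (hn : 2 * k ^ 2 ≤ n)
    (hTS : ∀ u v : Fin n, u ≠ v → TypeS k H c u v)
    {e f : Finset (Fin n)} (he : e.card = k) (hf : f.card = k)
    {ℓ : ℕ} (hl1 : 1 ≤ ℓ) (hlk : ℓ ≤ k)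
    (g h : Fin ℓ → Fin n) (hg : ∀ i, g i ∈ e \ f) (hh : ∀ i, h i ∈ f \ e)
    (hef : (e ∪ f).card = k + ℓ) (m : ℕ) :
    ∃ T : Fin ℓ → Finset (Fin n),
      (∀ i : Fin ℓ, (i : ℕ) < m →
        T i ∈ nbr H (g i) ∧ T i ∈ nbr H (h i) ∧
        c (insert (g i) (T i)) = c (insert (h i) (T i)) ∧ Disjoint (T i) (e ∪ f)) ∧
      (∀ i j : Fin ℓ, (i : ℕ) < m → (j : ℕ) < m → i ≠ j → Disjoint (T i) (T j)) := by
  classical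
  have hkn : k ≤ n := by
    have h1 : k ≤ k * k := Nat.le_mul_of_pos_left k (by omega)
    have h2 : k ^ 2 = k * k := sq k
    omega
  induction m with
  | zero =>
    exact ⟨fun _ => ∅, fun i hi => absurd hi (by omega), fun i j hi _ _ => absurd hi (by omega)⟩
  | succ m ih =>
    obtain ⟨T, hT1, hT2⟩ := ih
    by_cases hm : ℓ ≤ m
    · refine ⟨T, fun i _ => hT1 i (lt_of_lt_of_le i.isLt hm),
        fun i j _ _ hij => hT2 i j (lt_of_lt_of_le i.isLt hm) (lt_of_lt_of_le j.isLt hm) hij⟩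
    · push_neg at hm
      set i₀ : Fin ℓ := ⟨m, hm⟩ with hi₀
      have hgef : g i₀ ∈ e := (Finset.mem_sdiff.mp (hg i₀)).1
      have hhef : h i₀ ∈ f := (Finset.mem_sdiff.mp (hh i₀)).1
      have hgh : g i₀ ≠ h i₀ := by
        intro hE
        exact (Finset.mem_sdiff.mp (hg i₀)).2 (hE ▸ hhef)
      set filt : Finset (Fin ℓ) := Finset.univ.filter (fun j : Fin ℓ => (j : ℕ) < m) with hfilt
      set F : Finset (Fin n) := ((e ∪ f) \ {g i₀, h i₀}) ∪ filt.biUnion T with hF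
      have hpairsub : ({g i₀, h i₀} : Finset (Fin n)) ⊆ e ∪ f := by
        intro x hx
        rcases Finset.mem_insert.mp hx with hx | hx
        · exact hx ▸ Finset.mem_union_left _ hgef
        · rw [Finset.mem_singleton] at hx
          exact hx ▸ Finset.mem_union_right _ hhef
      have h1 : ((e ∪ f) \ {g i₀, h i₀}).card = k + ℓ - 2 := by
        rw [Finset.card_sdiff_of_subset hpairsub, hef, Finset.card_pair hgh]
      have hfiltcard : filt.card ≤ m := by
        have : filt.card ≤ (Finset.range m).card := by
          refine Finset.card_le_card_of_injOn (fun j => (j : ℕ)) ?_ ?_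
          · intro j hj
            rw [Finset.mem_coe, Finset.mem_filter] at hj
            exact Finset.mem_range.mpr hj.2
          · intro a _ b _ hab
            exact Fin.ext hab
        rwa [Finset.card_range] at this
      have h2 : (filt.biUnion T).card ≤ m * (k - 1) := by
        calc (filt.biUnion T).card ≤ ∑ j ∈ filt, (T j).card := Finset.card_biUnion_le
          _ ≤ filt.card * (k - 1) := by
              rw [← smul_eq_mul]
              apply Finset.sum_le_card_nsmul
              intro j hj
              rw [hfilt, Finset.mem_filter] at hj
              exact le_of_eq (card_of_mem_nbr hH (hT1 j hj.2).1)
          _ ≤ m * (k - 1) := Nat.mul_le_mul_right _ hfiltcard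
      have hFcard : F.card < k ^ 2 := by
        have hu : F.card ≤ (k + ℓ - 2) + m * (k - 1) := by
          rw [hF]
          refine (Finset.card_union_le _ _).trans ?_
          rw [h1]
          exact Nat.add_le_add_left h2 _
        have hmk : m * (k - 1) ≤ (k - 1) * (k - 1) :=
          Nat.mul_le_mul (by omega) (le_refl _)
        have hsq : (k - 1) * (k - 1) + 2 * k = k * k + 1 := by
          obtain ⟨k', rfl⟩ : ∃ k', k = k' + 1 := ⟨k - 1, by omega⟩
          simp only [Nat.add_sub_cancel]
          ring
        have hkk : k ^ 2 = k * k := sq k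
        omega
      have hgF : g i₀ ∉ F := by
        rw [hF, Finset.mem_union]
        rintro (hx | hx)
        · rw [Finset.mem_sdiff] at hx
          exact hx.2 (Finset.mem_insert_self _ _)
        · rw [Finset.mem_biUnion] at hx
          obtain ⟨j, hj, hx⟩ := hx
          rw [hfilt, Finset.mem_filter] at hj
          exact Finset.disjoint_left.mp (hT1 j hj.2).2.2.2 hx (Finset.mem_union_left _ hgef)
      have hhF : h i₀ ∉ F := by
        rw [hF, Finset.mem_union]
        rintro (hx | hx)
        · rw [Finset.mem_sdiff] at hx
          exact hx.2 (Finset.mem_insert_of_mem (Finset.mem_singleton_self _))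
        · rw [Finset.mem_biUnion] at hx
          obtain ⟨j, hj, hx⟩ := hx
          rw [hfilt, Finset.mem_filter] at hj
          exact Finset.disjoint_left.mp (hT1 j hj.2).2.2.2 hx (Finset.mem_union_right _ hhef)
      obtain ⟨T', hT'1, hT'2, hT'3, hT'4⟩ :=
        exists_good_T hH hk hkn hgh (hTS _ _ hgh) F hgF hFcard
      have hTsubF : ∀ j : Fin ℓ, (j : ℕ) < m → T j ⊆ F := by
        intro j hj a ha
        rw [hF, Finset.mem_union]
        right
        rw [Finset.mem_biUnion]
        exact ⟨j, by rw [hfilt, Finset.mem_filter]; exact ⟨Finset.mem_univ _, hj⟩, ha⟩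
      refine ⟨Function.update T i₀ T', ?_, ?_⟩
      · intro i hi
        by_cases hii : i = i₀
        · subst hii
          rw [Function.update_self]
          refine ⟨hT'1, hT'2, hT'3, ?_⟩
          rw [Finset.disjoint_left]
          intro a haT' haef
          by_cases hag : a = g i₀
          · exact (mem_nbr.mp hT'1).1 (hag ▸ haT')
          by_cases hah : a = h i₀
          · exact (mem_nbr.mp hT'2).1 (hah ▸ haT')
          have haF : a ∈ F := by
            rw [hF, Finset.mem_union]
            left
            rw [Finset.mem_sdiff]
            refine ⟨haef, ?_⟩
            simp only [Finset.mem_insert, Finset.mem_singleton]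
            push_neg
            exact ⟨hag, hah⟩
          exact Finset.disjoint_left.mp hT'4 haT' haF
        · have him : (i : ℕ) < m := by
            have : (i : ℕ) ≠ m := fun hE => hii (Fin.ext hE)
            omega
          rw [Function.update_of_ne hii]
          exact hT1 i him
      · intro i j hi hj hij
        by_cases hii : i = i₀
        · subst hii
          have hjj : j ≠ i₀ := fun hE => hij hE.symm
          have hjm : (j : ℕ) < m := by
            have : (j : ℕ) ≠ m := fun hE => hjj (Fin.ext hE)
            omega
          rw [Function.update_self, Function.update_of_ne hjj]
          exact hT'4.mono_right (hTsubF j hjm)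
        · by_cases hjj : j = i₀
          · subst hjj
            have him : (i : ℕ) < m := by
              have : (i : ℕ) ≠ m := fun hE => hii (Fin.ext hE)
              omega
            rw [Function.update_self, Function.update_of_ne hii]
            exact (hT'4.mono_right (hTsubF i him)).symm
          · have him : (i : ℕ) < m := by
              have : (i : ℕ) ≠ m := fun hE => hii (Fin.ext hE)
              omega
            have hjm : (j : ℕ) < m := by
              have : (j : ℕ) ≠ m := fun hE => hjj (Fin.ext hE)
              omega
            rw [Function.update_of_ne hii, Function.update_of_ne hjj]
            exact hT2 i j him hjm hij

lemma cprof_ne_aux {n k r : ℕ} (hk : 2 ≤ k) {c : Finset (Fin n) → Fin r}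
    {e f : Finset (Fin n)} (hcef : c e ≠ c f)
    {ℓ : ℕ} (g h : Fin ℓ → Fin n) (hg : ∀ i, g i ∈ e \ f) (hh : ∀ i, h i ∈ f \ e)
    (T : Fin ℓ → Finset (Fin n)) (hTc : ∀ i, (T i).card = k - 1)
    (hcol : ∀ i, c (insert (g i) (T i)) = c (insert (h i) (T i)))
    (hdisjef : ∀ i, Disjoint (T i) (e ∪ f))
    (hdisj : ∀ i j, i ≠ j → Disjoint (T i) (T j)) :
    cprof c (insert f (Finset.image (fun i => insert (g i) (T i)) Finset.univ)) ≠
      cprof c (insert e (Finset.image (fun i => insert (h i) (T i)) Finset.univ)) := by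
  classical
  intro heq
  have heqq := congrFun heq (c e)
  set A := Finset.image (fun i => insert (g i) (T i)) (Finset.univ : Finset (Fin ℓ)) with hA
  set B := Finset.image (fun i => insert (h i) (T i)) (Finset.univ : Finset (Fin ℓ)) with hB
  have hfA : f ∉ A := by
    rw [hA, Finset.mem_image]
    rintro ⟨i, -, hi⟩
    have : g i ∈ f := hi ▸ Finset.mem_insert_self _ _
    exact (Finset.mem_sdiff.mp (hg i)).2 this
  have heB : e ∉ B := by
    rw [hB, Finset.mem_image]
    rintro ⟨i, -, hi⟩
    have : h i ∈ e := hi ▸ Finset.mem_insert_self _ _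
    exact (Finset.mem_sdiff.mp (hh i)).2 this
  have hinj1 : Function.Injective (fun i => insert (g i) (T i)) := by
    intro i j hij
    by_contra hne
    have hTine : (T i).Nonempty := Finset.card_pos.mp (by rw [hTc i]; omega)
    obtain ⟨w, hw⟩ := hTine
    have hij' : insert (g i) (T i) = insert (g j) (T j) := hij
    have hw2 : w ∈ insert (g j) (T j) := by
      rw [← hij']
      exact Finset.mem_insert_of_mem hw
    rcases Finset.mem_insert.mp hw2 with h1 | h1
    · have hge : g j ∈ e ∪ f := Finset.mem_union_left _ (Finset.mem_sdiff.mp (hg j)).1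
      exact Finset.disjoint_left.mp (hdisjef i) hw (h1 ▸ hge)
    · exact Finset.disjoint_left.mp (hdisj i j hne) hw h1
  have hinj2 : Function.Injective (fun i => insert (h i) (T i)) := by
    intro i j hij
    by_contra hne
    have hTine : (T i).Nonempty := Finset.card_pos.mp (by rw [hTc i]; omega)
    obtain ⟨w, hw⟩ := hTine
    have hij' : insert (h i) (T i) = insert (h j) (T j) := hij
    have hw2 : w ∈ insert (h j) (T j) := by
      rw [← hij']
      exact Finset.mem_insert_of_mem hw
    rcases Finset.mem_insert.mp hw2 with h1 | h1
    · have hge : h j ∈ e ∪ f := Finset.mem_union_right _ (Finset.mem_sdiff.mp (hh j)).1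
      exact Finset.disjoint_left.mp (hdisjef i) hw (h1 ▸ hge)
    · exact Finset.disjoint_left.mp (hdisj i j hne) hw h1
  have hAc : (A.filter (fun x => c x = c e)).card =
      (Finset.univ.filter (fun i : Fin ℓ => c (insert (g i) (T i)) = c e)).card := by
    rw [hA, Finset.filter_image]
    exact Finset.card_image_of_injective _ hinj1
  have hBc : (B.filter (fun x => c x = c e)).card =
      (Finset.univ.filter (fun i : Fin ℓ => c (insert (h i) (T i)) = c e)).card := by
    rw [hB, Finset.filter_image]
    exact Finset.card_image_of_injective _ hinj2
  have hfe : (Finset.univ.filter (fun i : Fin ℓ => c (insert (g i) (T i)) = c e)) =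
      (Finset.univ.filter (fun i : Fin ℓ => c (insert (h i) (T i)) = c e)) := by
    apply Finset.filter_congr
    intro i _
    rw [hcol i]
  simp only [cprof] at heqq
  rw [Finset.filter_insert, Finset.filter_insert] at heqq
  rw [if_neg (fun hE : c f = c e => hcef hE.symm), if_pos rfl] at heqq
  rw [Finset.card_insert_of_notMem (fun hx => heB (Finset.filter_subset _ _ hx))] at heqq
  rw [hAc, hBc] at heqq
  rw [hfe] at heqq
  omega

end Aux

theorem exists_non_typeS (n k r : ℕ) (hn : 2 * k ^ 2 ≤ n) (hr : 2 ≤ r)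
    (H : Finset (Finset (Fin n))) (hH : HyperUniform k H) (c : Finset (Fin n) → Fin r)
    (hfree : GadgetFree k H c)
    (hdegree : ∀ v : Fin n,
      (1 / 2 : ℝ) * (((n - 1).choose (k - 1) : ℕ) : ℝ) +
        (((k ^ 2 + 1 : ℕ) : ℝ) / 2) * (((n - 2).choose (k - 2) : ℕ) : ℝ) < (hdeg H v : ℝ))
    (hnotmono : ∃ e ∈ H, ∃ f ∈ H, c e ≠ c f) :
    ∃ u v : Fin n, u ≠ v ∧ ¬ TypeS k H c u v := by
  classical
  by_contra hcon
  push_neg at hcon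
  obtain ⟨e, he, f, hf, hcef⟩ := hnotmono
  have hek := hH e he
  have hfk := hH f hf
  -- k ≥ 2
  have hk2 : 2 ≤ k := by
    rcases Nat.lt_or_ge k 2 with hlt | hge
    · interval_cases k
      · exact absurd (by rw [Finset.card_eq_zero.mp hek, Finset.card_eq_zero.mp hfk]) hcef
      · exfalso
        obtain ⟨v₀, hv₀⟩ := Finset.card_pos.mp (by omega : 0 < e.card)
        have hd := hdegree v₀
        have hle : hdeg H v₀ ≤ 1 := by
          rw [hdeg]
          have hsub : H.filter (fun a => v₀ ∈ a) ⊆ {{v₀}} := by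
            intro a ha
            rw [Finset.mem_filter] at ha
            obtain ⟨y, hy⟩ := Finset.card_eq_one.mp (hH a ha.1)
            rw [Finset.mem_singleton, hy]
            rw [hy, Finset.mem_singleton] at ha
            rw [ha.2]
          calc (H.filter (fun a => v₀ ∈ a)).card ≤ ({{v₀}} : Finset (Finset (Fin n))).card :=
              Finset.card_le_card hsub
            _ = 1 := Finset.card_singleton _
        have hcast : (hdeg H v₀ : ℝ) ≤ 1 := by exact_mod_cast hle
        simp only [Nat.sub_self, Nat.choose_zero_right] at hd
        norm_num at hd
        linarith
    · exact hge
  -- basic facts about e, f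
  have hne : e ≠ f := fun hE => hcef (by rw [hE])
  have hl1 : 1 ≤ (e \ f).card := by
    rw [Nat.one_le_iff_ne_zero]
    intro h0
    rw [Finset.card_eq_zero, Finset.sdiff_eq_empty_iff_subset] at h0
    exact hne (Finset.eq_of_subset_of_card_le h0 (by omega))
  have hlk : (e \ f).card ≤ k := hek ▸ Finset.card_le_card Finset.sdiff_subset
  have hcc : (e \ f).card = (f \ e).card := Finset.card_sdiff_comm (hek.trans hfk.symm)
  have hef : (e ∪ f).card = k + (e \ f).card := by
    have h5 := Finset.card_sdiff_add_card f e
    rw [Finset.union_comm e f]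
    omega
  -- enumerations
  set g : Fin (e \ f).card → Fin n := fun i => ((e \ f).equivFin.symm i : Fin n) with hgdef
  set h : Fin (e \ f).card → Fin n :=
    fun i => ((f \ e).equivFin.symm (Fin.cast hcc i) : Fin n) with hhdef
  have hg : ∀ i, g i ∈ e \ f := fun i => ((e \ f).equivFin.symm i).2
  have hh : ∀ i, h i ∈ f \ e := fun i => ((f \ e).equivFin.symm (Fin.cast hcc i)).2
  have hginj : Function.Injective g := fun a b hab =>
    (e \ f).equivFin.symm.injective (Subtype.coe_injective hab)
  have hhinj : Function.Injective h := fun a b hab => by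
    have := (f \ e).equivFin.symm.injective (Subtype.coe_injective hab)
    exact Fin.cast_injective hcc this
  have himg_g : Finset.image g Finset.univ = e \ f := by
    ext a
    simp only [Finset.mem_image, Finset.mem_univ, true_and]
    constructor
    · rintro ⟨i, rfl⟩
      exact hg i
    · intro ha
      refine ⟨(e \ f).equivFin ⟨a, ha⟩, ?_⟩
      simp [hgdef]
  have himg_h : Finset.image h Finset.univ = f \ e := by
    ext a
    simp only [Finset.mem_image, Finset.mem_univ, true_and]
    constructor
    · rintro ⟨i, rfl⟩
      exact hh i
    · intro ha
      refine ⟨Fin.cast hcc.symm ((f \ e).equivFin ⟨a, ha⟩), ?_⟩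
      simp [hhdef]
  -- build the T family
  obtain ⟨T, hTall, hTdisj⟩ :=
    build_T hH hk2 hn hcon hek hfk hl1 hlk g h hg hh hef (e \ f).card
  exact hfree.2.2 ⟨e, he, f, hf, (e \ f).card, hl1, hlk, g, h, T, hginj, hhinj,
    himg_g, himg_h,
    fun i => ⟨(hTall i i.isLt).1, (hTall i i.isLt).2.1⟩,
    fun i j hij => hTdisj i j i.isLt j.isLt hij,
    fun i => (hTall i i.isLt).2.2.2,
    cprof_ne_aux hk2 hcef g h hg hh T
      (fun i => card_of_mem_nbr hH (hTall i i.isLt).1)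
      (fun i => (hTall i i.isLt).2.2.1)
      (fun i => (hTall i i.isLt).2.2.2)
      (fun i j hij => hTdisj i j i.isLt j.isLt hij)⟩
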